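/- With C_f and C_b the forward/backward discrete cosine transform matrices and A₂ the M×M discrete Neumann Laplacian, one has C_f A₂ C_b = Λ where Λ = diag(2 − 2cos((m−1)π/M))_{m=1}^M. -/

import Mathlib

open Matrix Real Finset

/-- The `M×M` discrete Neumann Laplacian: tridiagonal with diagonal `(1,2,…,2,1)`
and off-diagonal entries `−1`. -/
def A2 (M : ℕ) : Matrix (Fin M) (Fin M) ℝ :=
  Matrix.of fun i j =>
    if i = j then (if i.val = 0 ∨ i.val = M - 1 then 1 else 2)
    else if i.val + 1 = j.val ∨ j.val + 1 = i.val then -1 else 0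

/-- Forward discrete cosine transform matrix (0-based indices). -/
noncomputable def Cf (M : ℕ) : Matrix (Fin M) (Fin M) ℝ :=
  Matrix.of fun i j =>
    (1 / Real.sqrt (2 * M)) * (2 * Real.cos ((i.val : ℝ) * (2 * (j.val : ℝ) + 1) * π / (2 * M)))

/-- Backward discrete cosine transform matrix (0-based indices). -/
noncomputable def Cb (M : ℕ) : Matrix (Fin M) (Fin M) ℝ :=
  Matrix.of fun i j =>
    if j.val = 0 then 1 / Real.sqrt (2 * M)
    else (1 / Real.sqrt (2 * M)) *
      (2 * Real.cos ((2 * (i.val : ℝ) + 1) * (j.val : ℝ) * π / (2 * M)))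

lemma tsum1 (M : ℕ) (α : ℝ) :
    2 * Real.sin α * ∑ j ∈ range M, Real.cos ((2*(j:ℝ)+1)*α) = Real.sin (2*(M:ℝ)*α) := by
  rw [Finset.mul_sum]
  have h : ∀ j : ℕ, 2 * Real.sin α * Real.cos ((2*(j:ℝ)+1)*α)
      = Real.sin (2*((j+1:ℕ):ℝ)*α) - Real.sin (2*(j:ℝ)*α) := by
    intro j
    push_cast
    rw [show 2*((j:ℝ)+1)*α = (2*(j:ℝ)+1)*α + α by ring,
        show 2*(j:ℝ)*α = (2*(j:ℝ)+1)*α - α by ring,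
        Real.sin_add, Real.sin_sub]
    ring
  simp_rw [h]
  rw [Finset.sum_range_sub (fun j : ℕ => Real.sin (2*(j:ℝ)*α))]
  norm_num

lemma tsum_vanish (M : ℕ) (hM : 0 < M) (t : ℤ) (ht0 : t ≠ 0) (ht : t.natAbs < 2*M) :
    ∑ j ∈ range M, Real.cos ((2*(j:ℝ)+1)*((t:ℝ)*π/(2*(M:ℝ)))) = 0 := by
  have hMR : (M:ℝ) ≠ 0 := by positivity
  have key := tsum1 M ((t:ℝ)*π/(2*(M:ℝ)))
  have h2 : 2*(M:ℝ)*((t:ℝ)*π/(2*(M:ℝ))) = (t:ℝ)*π := by field_simp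
  rw [h2, Real.sin_int_mul_pi] at key
  have hsin : Real.sin ((t:ℝ)*π/(2*(M:ℝ))) ≠ 0 := by
    intro h
    rw [Real.sin_eq_zero_iff] at h
    obtain ⟨n, hn⟩ := h
    have hpi : (0:ℝ) < π := Real.pi_pos
    have : (n:ℝ) * (2*(M:ℝ)) = (t:ℝ) := by
      field_simp at hn
      nlinarith [hn]
    have hd : n * (2*(M:ℤ)) = t := by exact_mod_cast this
    have hdvd : (2*(M:ℤ)) ∣ t := Dvd.intro_left n hd
    have h3 : (2*(M:ℤ)).natAbs ∣ t.natAbs := Int.natAbs_dvd_natAbs.mpr hdvd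
    have h4 : (2*(M:ℤ)).natAbs = 2*M := by simp [Int.natAbs_mul]
    rw [h4] at h3
    have h5 : 2*M ≤ t.natAbs := Nat.le_of_dvd (by omega) h3
    omega
  rcases mul_eq_zero.mp key with h | h
  · rcases mul_eq_zero.mp h with h' | h'
    · norm_num at h'
    · exact absurd h' hsin
  · exact h

lemma Cf_mul_Cb (M : ℕ) (hM : 2 ≤ M) : Cf M * Cb M = 1 := by
  have hMR : (0:ℝ) < (M:ℝ) := by positivity
  have hs : Real.sqrt (2*(M:ℝ)) * Real.sqrt (2*(M:ℝ)) = 2*(M:ℝ) :=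
    Real.mul_self_sqrt (by positivity)
  have hsne : Real.sqrt (2*(M:ℝ)) ≠ 0 := by positivity
  set c : ℝ := 1 / Real.sqrt (2*(M:ℝ)) with hc
  have hcc : c * c = 1 / (2*(M:ℝ)) := by rw [hc, div_mul_div_comm, hs]; norm_num
  ext i m
  rw [Matrix.mul_apply, Matrix.one_apply]
  simp only [Cf, Cb, Matrix.of_apply]
  rw [Fin.sum_univ_eq_sum_range (fun k =>
    c * (2 * Real.cos ((i.val : ℝ) * (2 * (k : ℝ) + 1) * π / (2 * M))) *
      (if m.val = 0 then c
       else c * (2 * Real.cos ((2 * (k : ℝ) + 1) * (m.val : ℝ) * π / (2 * M)))))]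
  by_cases hm0 : m.val = 0
  · simp only [if_pos hm0]
    by_cases hi0 : i.val = 0
    · have him : i = m := Fin.ext (by omega)
      rw [if_pos him]
      have : ∀ k ∈ range M, c * (2 * Real.cos ((i.val : ℝ) * (2 * (k : ℝ) + 1) * π / (2 * M))) * c
          = c * c * 2 := by
        intro k _
        simp only [hi0, Nat.cast_zero, zero_mul, zero_div, Real.cos_zero]
        ring
      rw [Finset.sum_congr rfl this, Finset.sum_const, card_range, nsmul_eq_mul, hcc]
      field_simp
    · have him : ¬ (i = m) := by
        intro h; exact hi0 (by rw [h]; exact hm0)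
      rw [if_neg him]
      have hre : ∀ k ∈ range M,
          c * (2 * Real.cos ((i.val : ℝ) * (2 * (k : ℝ) + 1) * π / (2 * M))) * c
          = (c * c * 2) * Real.cos ((2*(k:ℝ)+1) * (((i.val : ℤ):ℝ)*π/(2*(M:ℝ)))) := by
        intro k _
        rw [show (2*(k:ℝ)+1) * (((i.val : ℤ):ℝ)*π/(2*(M:ℝ)))
            = (i.val : ℝ) * (2 * (k : ℝ) + 1) * π / (2 * M) by push_cast; ring]
        ring
      rw [Finset.sum_congr rfl hre, ← Finset.mul_sum,
        tsum_vanish M (by omega) (i.val : ℤ) (by exact_mod_cast hi0) (by omega), mul_zero]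
  · simp only [if_neg hm0]
    have hre : ∀ k ∈ range M,
        c * (2 * Real.cos ((i.val : ℝ) * (2 * (k : ℝ) + 1) * π / (2 * M))) *
          (c * (2 * Real.cos ((2 * (k : ℝ) + 1) * (m.val : ℝ) * π / (2 * M))))
        = (c * c * 2) * (Real.cos ((2*(k:ℝ)+1) * ((((i.val:ℤ)+(m.val:ℤ)):ℝ)*π/(2*(M:ℝ))))
            + Real.cos ((2*(k:ℝ)+1) * ((((i.val:ℤ)-(m.val:ℤ)):ℝ)*π/(2*(M:ℝ))))) := by
      intro k _
      rw [show (2*(k:ℝ)+1) * ((((i.val:ℤ)+(m.val:ℤ)):ℝ)*π/(2*(M:ℝ)))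
          = (i.val : ℝ) * (2 * (k : ℝ) + 1) * π / (2 * M)
            + (2 * (k : ℝ) + 1) * (m.val : ℝ) * π / (2 * M) by push_cast; ring,
        show (2*(k:ℝ)+1) * ((((i.val:ℤ)-(m.val:ℤ)):ℝ)*π/(2*(M:ℝ)))
          = (i.val : ℝ) * (2 * (k : ℝ) + 1) * π / (2 * M)
            - (2 * (k : ℝ) + 1) * (m.val : ℝ) * π / (2 * M) by push_cast; ring,
        Real.cos_add, Real.cos_sub]
      ring
    rw [Finset.sum_congr rfl hre, ← Finset.mul_sum, Finset.sum_add_distrib]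
    have hv1 := tsum_vanish M (by omega) ((i.val:ℤ)+(m.val:ℤ)) (by omega) (by omega)
    push_cast at hv1 ⊢
    rw [hv1, zero_add]
    by_cases him : i = m
    · rw [if_pos him]
      have ht2 : (i.val:ℝ) - (m.val:ℝ) = 0 := by rw [him]; ring
      have : ∀ k ∈ range M, Real.cos ((2*(k:ℝ)+1) * (((i.val:ℝ)-(m.val:ℝ))*π/(2*(M:ℝ)))) = 1 := by
        intro k _
        rw [ht2]
        norm_num
      rw [Finset.sum_congr rfl this, Finset.sum_const, card_range, nsmul_eq_mul, mul_one, hcc]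
      field_simp
    · rw [if_neg him]
      have hne : (i.val:ℤ) - (m.val:ℤ) ≠ 0 := by
        intro h
        exact him (Fin.ext (by omega))
      have hv2 := tsum_vanish M (by omega) ((i.val:ℤ)-(m.val:ℤ)) hne (by omega)
      push_cast at hv2
      rw [hv2, mul_zero]
lemma trig_int (x θ : ℝ) : Real.cos (x - 2*θ) + Real.cos (x + 2*θ) = 2*Real.cos (2*θ) * Real.cos x := by
  rw [Real.cos_sub, Real.cos_add]; ring

lemma key (M : ℕ) (hM : 2 ≤ M) (i : Fin M) (θ : ℝ)
    (hbd : Real.cos ((2*(M:ℝ)+1)*θ) = Real.cos ((2*(M:ℝ)-1)*θ)) :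
    ∑ k : Fin M, A2 M i k * Real.cos ((2*(k.val:ℝ)+1)*θ)
      = (2 - 2*Real.cos (2*θ)) * Real.cos ((2*(i.val:ℝ)+1)*θ) := by
  set f : Fin M → ℝ := fun k => Real.cos ((2*(k.val:ℝ)+1)*θ) with hf
  have hsplit : ∀ k : Fin M, A2 M i k * f k =
      (if i = k then (if i.val = 0 ∨ i.val = M-1 then 1 else 2) * f k else 0)
    + ((if k.val + 1 = i.val then -f k else 0)
    + (if i.val + 1 = k.val then -f k else 0)) := by
    intro k
    simp only [A2, Matrix.of_apply]
    rcases eq_or_ne i k with rfl | h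
    · have hne : ¬(i.val + 1 = i.val) := by omega
      simp only [if_pos rfl, if_neg hne, eq_self_iff_true, if_true, add_zero]
    · rw [if_neg h, if_neg h]
      by_cases h2 : i.val + 1 = k.val
      · rw [if_pos (Or.inl h2), if_pos h2, if_neg (by omega)]
        ring
      · by_cases h3 : k.val + 1 = i.val
        · rw [if_pos (Or.inr h3), if_pos h3, if_neg h2]
          ring
        · rw [if_neg (by tauto), if_neg h3, if_neg h2]
          ring
  rw [Finset.sum_congr rfl (fun k _ => hsplit k), Finset.sum_add_distrib, Finset.sum_add_distrib]
  rw [Finset.sum_ite_eq univ i (fun k => (if i.val = 0 ∨ i.val = M-1 then (1:ℝ) else 2) * f k),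
    if_pos (Finset.mem_univ i)]
  have hS2 : ∑ k : Fin M, (if k.val + 1 = i.val then -f k else 0)
      = if i.val = 0 then 0 else -Real.cos ((2*((i.val:ℝ)-1)+1)*θ) := by
    rw [hf]
    rw [Fin.sum_univ_eq_sum_range
      (fun k : ℕ => if k + 1 = i.val then -Real.cos ((2*(k:ℝ)+1)*θ) else 0) M]
    by_cases hi0 : i.val = 0
    · rw [if_pos hi0]
      exact Finset.sum_eq_zero (fun k _ => if_neg (by omega))
    · rw [if_neg hi0]
      rw [Finset.sum_eq_single (i.val - 1)
        (fun b _ hb => if_neg (by omega))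
        (fun h => absurd (Finset.mem_range.mpr (by omega)) h)]
      rw [if_pos (by omega), Nat.cast_sub (by omega), Nat.cast_one]
  have hS3 : ∑ k : Fin M, (if i.val + 1 = k.val then -f k else 0)
      = if i.val = M - 1 then 0 else -Real.cos ((2*((i.val:ℝ)+1)+1)*θ) := by
    rw [hf]
    rw [Fin.sum_univ_eq_sum_range
      (fun k : ℕ => if i.val + 1 = k then -Real.cos ((2*(k:ℝ)+1)*θ) else 0) M]
    by_cases hiM : i.val = M - 1
    · rw [if_pos hiM]
      exact Finset.sum_eq_zero (fun k hk => if_neg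
        (fun hc => by have := Finset.mem_range.mp hk; omega))
    · rw [if_neg hiM]
      rw [Finset.sum_eq_single (i.val + 1)
        (fun b _ hb => if_neg (by omega))
        (fun h => absurd (Finset.mem_range.mpr (by omega)) h)]
      rw [if_pos rfl, Nat.cast_add, Nat.cast_one]
  rw [hS2, hS3, hf]
  by_cases hi0 : i.val = 0
  · have hiM : ¬ (i.val = M - 1) := by omega
    rw [if_pos (Or.inl hi0), if_pos hi0, if_neg hiM]
    simp only [hi0, Nat.cast_zero]
    have hcn : Real.cos (θ - 2*θ) = Real.cos θ := by
      rw [show θ - 2*θ = -θ by ring, Real.cos_neg]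
    rw [show (2*(0:ℝ)+1)*θ = θ by ring,
      show (2*((0:ℝ)+1)+1)*θ = θ + 2*θ by ring]
    linear_combination (-1 : ℝ) * trig_int θ θ + hcn
  · by_cases hiM : i.val = M - 1
    · rw [if_pos (Or.inr hiM), if_neg hi0, if_pos hiM]
      have hiR : ((i.val:ℕ):ℝ) = (M:ℝ) - 1 := by
        rw [hiM, Nat.cast_sub (by omega), Nat.cast_one]
      rw [hiR]
      rw [show (2*(M:ℝ)-1)*θ = (2*((M:ℝ)-1)+1)*θ by ring,
        show (2*(M:ℝ)+1)*θ = (2*((M:ℝ)-1)+1)*θ + 2*θ by ring] at hbd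
      rw [show (2*((M:ℝ)-1-1)+1)*θ = (2*((M:ℝ)-1)+1)*θ - 2*θ by ring]
      have hfix : Real.cos ((2*(i.val:ℝ)+1)*θ) = Real.cos ((2*((M:ℝ)-1)+1)*θ) := by
        rw [hiR]
      linear_combination (-1 : ℝ) * trig_int ((2*((M:ℝ)-1)+1)*θ) θ + hbd + hfix
    · rw [if_neg (by tauto), if_neg hi0, if_neg hiM]
      rw [show (2*((i.val:ℝ)-1)+1)*θ = (2*(i.val:ℝ)+1)*θ - 2*θ by ring,
        show (2*((i.val:ℝ)+1)+1)*θ = (2*(i.val:ℝ)+1)*θ + 2*θ by ring]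
      linear_combination (-1 : ℝ) * trig_int ((2*(i.val:ℝ)+1)*θ) θ

lemma hbd_lem (M : ℕ) (hM : 2 ≤ M) (m : ℕ) :
    Real.cos ((2*(M:ℝ)+1)*((m:ℝ)*π/(2*(M:ℝ)))) = Real.cos ((2*(M:ℝ)-1)*((m:ℝ)*π/(2*(M:ℝ)))) := by
  have hMR : (M:ℝ) ≠ 0 := by positivity
  have h2Mθ : 2*(M:ℝ)*((m:ℝ)*π/(2*(M:ℝ))) = (m:ℝ)*π := by field_simp
  rw [show (2*(M:ℝ)+1)*((m:ℝ)*π/(2*(M:ℝ)))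
      = 2*(M:ℝ)*((m:ℝ)*π/(2*(M:ℝ))) + (m:ℝ)*π/(2*(M:ℝ)) by ring,
    show (2*(M:ℝ)-1)*((m:ℝ)*π/(2*(M:ℝ)))
      = 2*(M:ℝ)*((m:ℝ)*π/(2*(M:ℝ))) - (m:ℝ)*π/(2*(M:ℝ)) by ring,
    h2Mθ, Real.cos_add, Real.cos_sub, Real.sin_nat_mul_pi]
  ring

lemma A2_mul_Cb (M : ℕ) (hM : 2 ≤ M) :
    A2 M * Cb M = Cb M * Matrix.diagonal (fun m : Fin M => 2 - 2 * Real.cos ((m.val : ℝ) * π / M)) := by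
  have hMR : (M:ℝ) ≠ 0 := by positivity
  ext i m
  rw [Matrix.mul_apply, Matrix.mul_diagonal]
  simp only [Cb, Matrix.of_apply]
  set θ : ℝ := (m.val:ℝ)*π/(2*(M:ℝ)) with hθ
  have hk := key M hM i θ (by rw [hθ]; exact hbd_lem M hM m.val)
  by_cases hm0 : m.val = 0
  · simp only [if_pos hm0]
    have hθ0 : θ = 0 := by rw [hθ, hm0]; norm_num
    rw [hθ0] at hk
    simp only [mul_zero, Real.cos_zero, mul_one] at hk
    rw [← Finset.sum_mul, hk]
    simp [hm0]
  · simp only [if_neg hm0]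
    have hterm : ∀ k ∈ Finset.univ, A2 M i k *
        (1 / Real.sqrt (2*(M:ℝ)) * (2 * Real.cos ((2*(k.val:ℝ)+1) * (m.val:ℝ) * π / (2*(M:ℝ)))))
        = (A2 M i k * Real.cos ((2*(k.val:ℝ)+1)*θ)) * (1 / Real.sqrt (2*(M:ℝ)) * 2) := by
      intro k _
      rw [hθ, show (2*(k.val:ℝ)+1)*((m.val:ℝ)*π/(2*(M:ℝ)))
          = (2*(k.val:ℝ)+1) * (m.val:ℝ) * π / (2*(M:ℝ)) by ring]
      ring
    rw [Finset.sum_congr rfl hterm, ← Finset.sum_mul, hk]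
    have h2θ : 2*θ = (m.val:ℝ)*π/(M:ℝ) := by rw [hθ]; field_simp
    rw [← h2θ,
      show (2*(i.val:ℝ)+1) * (m.val:ℝ) * π / (2*(M:ℝ)) = (2*(i.val:ℝ)+1)*θ by rw [hθ]; ring]
    ring

/-- `C_f A₂ C_b = Λ = diag(2 − 2cos((m−1)π/M))`. -/
theorem stmt15 (M : ℕ) (hM : 2 ≤ M) :
    Cf M * A2 M * Cb M
      = Matrix.diagonal (fun m : Fin M => 2 - 2 * Real.cos ((m.val : ℝ) * π / M)) := by
  calc Cf M * A2 M * Cb M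
      = Cf M * (A2 M * Cb M) := by rw [Matrix.mul_assoc]
    _ = Cf M * (Cb M * Matrix.diagonal (fun m : Fin M => 2 - 2 * Real.cos ((m.val : ℝ) * π / M))) := by
        rw [A2_mul_Cb M hM]
    _ = (Cf M * Cb M) * Matrix.diagonal (fun m : Fin M => 2 - 2 * Real.cos ((m.val : ℝ) * π / M)) := by
        rw [Matrix.mul_assoc]
    _ = Matrix.diagonal (fun m : Fin M => 2 - 2 * Real.cos ((m.val : ℝ) * π / M)) := by
        rw [Cf_mul_Cb M hM, Matrix.one_mul]
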